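/- arXiv:2507.06600 — 8 statements merged into one kernel-verified Lean document; each statement's English description precedes it below -/
import Mathlib

section
/- Let S be a semigroup and let a ∈ S be a regular element (i.e. a = a·x·a for some x ∈ S) which can be written as a product of idempotents of S. Then there exist k ≥ 1 and idempotents e_1, …, e_k of S such that a = e_1·…·e_k, a 𝓡 e_1, e_k 𝓛 a, and the relations alternate along the product: for each 1 ≤ i < k, e_i 𝓛 e_{i+1} if i is odd and e_i 𝓡 e_{i+1} if i is even (so that a 𝓡 e_1 𝓛 e_2 𝓡 e_3 𝓛 … 𝓡 e_k 𝓛 a). -/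
/-!
Proposition 2.2 (FitzGerald–Hall): a regular element that is a product of idempotents
admits an alternating idempotent factorisation
`a 𝓡 e_0 𝓛 e_1 𝓡 e_2 𝓛 ⋯ 𝓡 e_k 𝓛 a` (0-indexed).
-/

namespace Stmt0

variable {S : Type*} [Semigroup S]

/-- Green's `≤𝓡` preorder: `a ≤𝓡 b` iff `a = b` or `a = b * x` for some `x`. -/
def leR (a b : S) : Prop := a = b ∨ ∃ x, a = b * x

/-- Green's `≤𝓛` preorder: `a ≤𝓛 b` iff `a = b` or `a = x * b` for some `x`. -/
def leL (a b : S) : Prop := a = b ∨ ∃ x, a = x * b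

/-- Green's `𝓡` relation. -/
def greenR (a b : S) : Prop := leR a b ∧ leR b a

/-- Green's `𝓛` relation. -/
def greenL (a b : S) : Prop := leL a b ∧ leL b a

/-- The product `u 0 * u 1 * ⋯ * u k`. -/
def prodFrom (u : ℕ → S) : ℕ → S
  | 0 => u 0
  | k + 1 => prodFrom u k * u (k + 1)

/-- Splitting a product at position `j`. -/
lemma prodFrom_split (u : ℕ → S) (j m : ℕ) :
    prodFrom u j * prodFrom (fun i => u (j + 1 + i)) m = prodFrom u (j + 1 + m) := by
  induction m with
  | zero => rfl
  | succ m ih =>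
    show prodFrom u j * (prodFrom (fun i => u (j + 1 + i)) m * u (j + 1 + (m + 1))) = _
    rw [← mul_assoc, ih]
    rfl

/-- The suffix product `u j * u (j+1) * ⋯ * u k`. -/
def sfx (u : ℕ → S) (k j : ℕ) : S := prodFrom (fun i => u (j + i)) (k - j)

lemma sfx_zero (u : ℕ → S) (k : ℕ) : sfx u k 0 = prodFrom u k := by
  have h : (fun i => u (0 + i)) = u := by funext i; rw [Nat.zero_add]
  show prodFrom (fun i => u (0 + i)) (k - 0) = prodFrom u k
  rw [h, Nat.sub_zero]

lemma sfx_last (u : ℕ → S) (k : ℕ) : sfx u k k = u k := by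
  show prodFrom (fun i => u (k + i)) (k - k) = u k
  rw [Nat.sub_self]
  show u (k + 0) = u k
  rw [Nat.add_zero]

lemma prodFrom_shift (u : ℕ → S) (j m : ℕ) :
    prodFrom (fun i => u (j + i)) (m + 1) = u j * prodFrom (fun i => u (j + 1 + i)) m := by
  induction m with
  | zero => rfl
  | succ m ih =>
    have hidx : j + (m + 1 + 1) = j + 1 + (m + 1) := by omega
    calc prodFrom (fun i => u (j + i)) (m + 1 + 1)
        = prodFrom (fun i => u (j + i)) (m + 1) * u (j + (m + 1 + 1)) := rfl
      _ = u j * prodFrom (fun i => u (j + 1 + i)) m * u (j + 1 + (m + 1)) := by rw [ih, hidx]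
      _ = u j * (prodFrom (fun i => u (j + 1 + i)) m * u (j + 1 + (m + 1))) := mul_assoc _ _ _
      _ = u j * prodFrom (fun i => u (j + 1 + i)) (m + 1) := rfl

lemma sfx_cons (u : ℕ → S) {k j : ℕ} (h : j < k) :
    sfx u k j = u j * sfx u k (j + 1) := by
  have hm : k - j = (k - (j + 1)) + 1 := by omega
  show prodFrom (fun i => u (j + i)) (k - j) = u j * prodFrom (fun i => u (j + 1 + i)) (k - (j + 1))
  rw [hm, prodFrom_shift]

theorem fitzgerald_hall (a : S)
    (hreg : ∃ x : S, a = a * x * a)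
    (hgen : ∃ (k : ℕ) (u : ℕ → S), (∀ i ≤ k, u i * u i = u i) ∧ a = prodFrom u k) :
    ∃ (k : ℕ) (e : ℕ → S),
      (∀ i ≤ k, e i * e i = e i) ∧
      a = prodFrom e k ∧
      greenR a (e 0) ∧
      greenL (e k) a ∧
      ∀ i < k, (Even i → greenL (e i) (e (i + 1))) ∧ (Odd i → greenR (e i) (e (i + 1))) := by
  obtain ⟨x, hx⟩ := hreg
  obtain ⟨k, u, hu, hprod⟩ := hgen
  set b := x * a * x with hb
  have hab : a * b * a = a := by
    calc a * b * a = a * x * (a * x * a) := by rw [hb]; simp only [mul_assoc]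
      _ = a * x * a := by conv_lhs => rw [← hx]
      _ = a := hx.symm
  have hbab : b * a * b = b := by
    calc b * a * b = x * (a * x * a) * (x * a * x) := by rw [hb]; simp only [mul_assoc]
      _ = x * a * (x * a * x) := by conv_lhs => rw [← hx]
      _ = x * (a * x * a) * x := by simp only [mul_assoc]
      _ = x * a * x := by conv_lhs => rw [← hx]
      _ = b := hb.symm
  -- collapse facts
  have hL_sfx' : ∀ j < k, prodFrom u j * sfx u k (j + 1) = a := by
    intro j hj
    have h := prodFrom_split u j (k - (j + 1))
    rw [show j + 1 + (k - (j + 1)) = k from by omega] at h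
    calc prodFrom u j * sfx u k (j + 1) = prodFrom u k := h
      _ = a := hprod.symm
  have hLu : ∀ j ≤ k, prodFrom u j * u j = prodFrom u j := by
    intro j hj
    cases j with
    | zero => exact hu 0 (by omega)
    | succ m =>
      show prodFrom u m * u (m + 1) * u (m + 1) = prodFrom u m * u (m + 1)
      rw [mul_assoc, hu (m + 1) hj]
  have hL_sfx : ∀ j ≤ k, prodFrom u j * sfx u k j = a := by
    intro j hj
    rcases eq_or_lt_of_le hj with he | hlt
    · subst he
      rw [sfx_last, hLu j le_rfl]
      exact hprod.symm
    · rw [sfx_cons u hlt, ← mul_assoc, hLu j (le_of_lt hlt)]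
      exact hL_sfx' j hlt
  -- the key multiplication fact
  have key : ∀ X Y Z W : S, Y * Z = a → X * b * Y * (Z * b * W) = X * b * W := by
    intro X Y Z W h
    calc X * b * Y * (Z * b * W) = X * (b * (Y * Z) * b * W) := by simp only [mul_assoc]
      _ = X * (b * a * b * W) := by rw [h]
      _ = X * (b * W) := by rw [hbab]
      _ = X * b * W := (mul_assoc _ _ _).symm
  obtain ⟨P, hP⟩ : ∃ P : ℕ → S, ∀ j, P j = sfx u k j * b * prodFrom u j := ⟨_, fun _ => rfl⟩
  obtain ⟨Q, hQ⟩ : ∃ Q : ℕ → S, ∀ j, Q j = sfx u k (j + 1) * b * prodFrom u j := ⟨_, fun _ => rfl⟩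
  obtain ⟨e, hev, hod⟩ : ∃ e : ℕ → S, (∀ j, e (2 * j) = P j) ∧ (∀ j, e (2 * j + 1) = Q j) := by
    refine ⟨fun t => if t % 2 = 0 then P (t / 2) else Q (t / 2), fun j => ?_, fun j => ?_⟩
    · have h1 : (2 * j) % 2 = 0 := by omega
      have h2 : (2 * j) / 2 = j := by omega
      simp only [h1, h2, if_pos]
    · have h1 : ¬ ((2 * j + 1) % 2 = 0) := by omega
      have h2 : (2 * j + 1) / 2 = j := by omega
      simp only [h1, h2, if_neg, if_false]
  have hPP : ∀ j ≤ k, P j * P j = P j := by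
    intro j hj; rw [hP]; exact key _ _ _ _ (hL_sfx j hj)
  have hQQ : ∀ j < k, Q j * Q j = Q j := by
    intro j hj; rw [hQ]; exact key _ _ _ _ (hL_sfx' j hj)
  have hPQ : ∀ j < k, P j * Q j = P j := by
    intro j hj; rw [hP, hQ]; exact key _ _ _ _ (hL_sfx' j hj)
  have hQP : ∀ j < k, Q j * P j = Q j := by
    intro j hj; rw [hP, hQ]; exact key _ _ _ _ (hL_sfx j hj.le)
  have hQP' : ∀ j < k, Q j * P (j + 1) = P (j + 1) := by
    intro j hj; rw [hP, hQ]; exact key _ _ _ _ (hL_sfx' j hj)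
  have hPQ' : ∀ j < k, P (j + 1) * Q j = Q j := by
    intro j hj; rw [hP, hQ]; exact key _ _ _ _ (hL_sfx (j + 1) hj)
  have hprodE : ∀ j, j ≤ k → prodFrom e (2 * j) = a * b * prodFrom u j := by
    intro j
    induction j with
    | zero =>
      intro _
      have h0 : e 0 = P 0 := hev 0
      show e 0 = a * b * prodFrom u 0
      rw [h0, hP, sfx_zero, ← hprod]
    | succ m ih =>
      intro hj
      have hmk : m < k := by omega
      show prodFrom e (2 * m) * e (2 * m + 1) * e (2 * (m + 1)) = a * b * prodFrom u (m + 1)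
      rw [ih (by omega), hod m, hev (m + 1), hQ, hP,
        key a _ _ _ (hL_sfx' m hmk), key a _ _ _ (hL_sfx' m hmk)]
  have hprodA : a = prodFrom e (2 * k) := by
    rw [hprodE k le_rfl, ← hprod]
    exact hab.symm
  refine ⟨2 * k, e, ?_, hprodA, ?_, ?_, ?_⟩
  · -- idempotents
    intro i hi
    rcases Nat.even_or_odd i with ⟨j, hj⟩ | ⟨j, hj⟩
    · have h2 : i = 2 * j := by omega
      rw [h2, hev j]
      exact hPP j (by omega)
    · have h2 : i = 2 * j + 1 := by omega
      rw [h2, hod j]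
      exact hQQ j (by omega)
  · -- greenR a (e 0)
    have h0 : e 0 = P 0 := hev 0
    constructor
    · refine Or.inr ⟨sfx u k 0, ?_⟩
      rw [h0, hP, mul_assoc, hL_sfx 0 (Nat.zero_le k), sfx_zero, ← hprod]
      exact hab.symm
    · refine Or.inr ⟨b * prodFrom u 0, ?_⟩
      rw [h0, hP, sfx_zero, ← hprod, mul_assoc]
  · -- greenL (e (2*k)) a
    have hk : e (2 * k) = P k := hev k
    constructor
    · refine Or.inr ⟨sfx u k k * b, ?_⟩
      rw [hk, hP, ← hprod]
    · refine Or.inr ⟨prodFrom u k, ?_⟩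
      rw [hk, hP, ← mul_assoc, ← mul_assoc, hL_sfx k le_rfl, ← hprod]
      exact hab.symm
  · -- alternation
    intro i hi
    constructor
    · rintro ⟨j, hj⟩
      have h2 : i = 2 * j := by omega
      have hjk : j < k := by omega
      rw [h2, hev j, hod j]
      exact ⟨Or.inr ⟨P j, (hPQ j hjk).symm⟩, Or.inr ⟨Q j, (hQP j hjk).symm⟩⟩
    · rintro ⟨j, hj⟩
      have h2 : i = 2 * j + 1 := by omega
      have hjk : j < k := by omega
      rw [h2, hod j, show 2 * j + 1 + 1 = 2 * (j + 1) from by ring, hev (j + 1)]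
      exact ⟨Or.inr ⟨Q j, (hPQ' j hjk).symm⟩, Or.inr ⟨P (j + 1), (hQP' j hjk).symm⟩⟩

end Stmt0
end

section
/- Let S be a regular *-semigroup, let p, q be projections of S with p 𝓕 q, and suppose u is an idempotent of S satisfying u·p = p, u·(q·p) = q·p, p·u = p·q and (q·p)·u = q. Then p = q, and moreover p = p·q = q·p. (In other words, for a friendly pair (p,q) the square (p, pq; qp, q) can only be LR-singularised when it is totally degenerate.) -/
/-!
Subsection 7.3: in a regular *-semigroup, if `(p,q)` is a friendly pair of projections and
the square `(p, pq; qp, q)` is LR-singularised by an idempotent `u`, then the square is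
totally degenerate: `p = q = pq = qp`.
-/

namespace Stmt2

variable {S : Type*} [Semigroup S] [StarMul S]

/-- A projection of a regular *-semigroup. -/
def IsProjection (p : S) : Prop := star p = p ∧ p * p = p

/-- Friendliness of projections. -/
def Friends (p q : S) : Prop := p * q * p = p ∧ q * p * q = q

theorem degenerate_friendly_square
    (hreg : ∀ a : S, a * star a * a = a)
    (p q : S) (hp : IsProjection p) (hq : IsProjection q) (hF : Friends p q)
    (u : S) (hu : u * u = u)
    (h1 : u * p = p) (h2 : u * (q * p) = q * p)
    (h3 : p * u = p * q) (h4 : (q * p) * u = q) :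
    p = q ∧ p = p * q ∧ p = q * p := by
  have hsu : star u * p = q * p := by
    have := congrArg star h3
    simpa [star_mul, hp.1, hq.1] using this
  have key : p = q * p := by
    calc p = u * p := h1.symm
      _ = (u * star u * u) * p := by rw [hreg u]
      _ = u * (star u * (u * p)) := by simp [mul_assoc]
      _ = u * (q * p) := by rw [h1, hsu]
      _ = q * p := h2
  have key2 : p = p * q := by
    have := congrArg star key
    simpa [star_mul, hp.1, hq.1] using this
  have hpq : p = q := by
    calc p = p * q := key2
      _ = q * p * q := by rw [← key]
      _ = q := hF.2
  exact ⟨hpq, key2, key⟩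

end Stmt2
end

section
/- Let S be a regular *-semigroup and let p, s, u, v, w be projections of S such that s 𝓕 v, s 𝓕 w, u 𝓕 v, u 𝓕 w, p·s·p = v and p·u·p = w (i.e. (s,u;v,w) is a p-linked diamond). Then v 𝓕 w; explicitly, v·w·v = v and w·v·w = w. -/
/-!
Remark 5.2: if `(s,u;v,w)` is a `p`-linked diamond of projections in a regular *-semigroup,
then `v` and `w` are friends: `v·w·v = v` and `w·v·w = w`.
-/

namespace Stmt3

variable {S : Type*} [Semigroup S] [StarMul S]

/-- A projection of a regular *-semigroup. -/
def IsProjection (p : S) : Prop := star p = p ∧ p * p = p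

/-- Friendliness of projections. -/
def Friends (p q : S) : Prop := p * q * p = p ∧ q * p * q = q

theorem linked_diamond_friends
    (hreg : ∀ a : S, a * star a * a = a)
    (p s u v w : S)
    (hp : IsProjection p) (hs : IsProjection s) (hu : IsProjection u)
    (hv : IsProjection v) (hw : IsProjection w)
    (hsv : Friends s v) (hsw : Friends s w) (huv : Friends u v) (huw : Friends u w)
    (hpv : p * s * p = v) (hpw : p * u * p = w) :
    Friends v w := by
  obtain ⟨_, hp2⟩ := hp
  have hvp : v * p = v := by rw [← hpv, mul_assoc (p*s), hp2]
  have hpv' : p * v = v := by rw [← hpv, ← mul_assoc, ← mul_assoc, hp2]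
  have hwp : w * p = w := by rw [← hpw, mul_assoc (p*u), hp2]
  have hpw' : p * w = w := by rw [← hpw, ← mul_assoc, ← mul_assoc, hp2]
  constructor
  · calc v * w * v = v * (p * u * p) * v := by rw [hpw]
    _ = (v * p) * u * (p * v) := by simp only [mul_assoc]
    _ = v * u * v := by rw [hvp, hpv']
    _ = v := huv.2
  · calc w * v * w = w * (p * s * p) * w := by rw [hpv]
    _ = (w * p) * s * (p * w) := by simp only [mul_assoc]
    _ = w * s * w := by rw [hwp, hpw']
    _ = w := hsw.2

end Stmt3
end

section
/- Let S be a regular *-semigroup and let s, u, v, w, p be projections of S with s 𝓕 v, s 𝓕 w, u 𝓕 v, u 𝓕 w, p·s·p = v and p·u·p = w (so (s,u;v,w) is a p-linked diamond and (s·v, s·w; u·v, u·w) is the corresponding p-linked square of idempotents). Then the squares (s·v, s·w; v, v·w) and (u·v, u·w; w·v, w) are both UD-singularised by p; explicitly: (s·v)·p = s·v, (s·w)·p = s·w, p·(s·v) = v, p·(s·w) = v·w, and (u·v)·p = u·v, (u·w)·p = u·w, p·(u·v) = w·v, p·(u·w) = w. (Lemma 7.5.) -/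
/-!
Lemma 7.5: given a `p`-linked diamond `(s,u;v,w)` of projections, the squares
`(s·v, s·w; v, v·w)` and `(u·v, u·w; w·v, w)` are both UD-singularised by `p`.
-/

namespace Stmt4

variable {S : Type*} [Semigroup S] [StarMul S]

/-- A projection of a regular *-semigroup. -/
def IsProjection (p : S) : Prop := star p = p ∧ p * p = p

/-- Friendliness of projections. -/
def Friends (p q : S) : Prop := p * q * p = p ∧ q * p * q = q

theorem linked_square_singular
    (hreg : ∀ a : S, a * star a * a = a)
    (p s u v w : S)
    (hp : IsProjection p) (hs : IsProjection s) (hu : IsProjection u)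
    (hv : IsProjection v) (hw : IsProjection w)
    (hsv : Friends s v) (hsw : Friends s w) (huv : Friends u v) (huw : Friends u w)
    (hpv : p * s * p = v) (hpw : p * u * p = w) :
    ((s * v) * p = s * v ∧ (s * w) * p = s * w ∧
      p * (s * v) = v ∧ p * (s * w) = v * w) ∧
    ((u * v) * p = u * v ∧ (u * w) * p = u * w ∧
      p * (u * v) = w * v ∧ p * (u * w) = w) := by
  obtain ⟨-, hpp⟩ := hp
  subst hpv
  subst hpw
  obtain ⟨-, hvv⟩ := hv
  obtain ⟨-, hww⟩ := hw
  have h1 : ∀ x : S, p * (p * x) = p * x := fun x => by rw [← mul_assoc, hpp]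
  simp only [mul_assoc, hpp, h1] at hvv hww
  refine ⟨⟨?_, ?_, ?_, ?_⟩, ?_, ?_, ?_, ?_⟩ <;>
    simp only [mul_assoc, hpp, h1] <;>
    first | rfl | exact hvv | exact hww

end Stmt4
end

section
/- Let S be a regular *-semigroup, let s, u, v, w be projections of S with s 𝓕 v, s 𝓕 w, u 𝓕 v, u 𝓕 w, and let p be a projection of S such that p·(s·v) = s·v, p·(u·v) = u·v, (s·v)·p = s·w and (u·v)·p = u·w (i.e. the square (s·v, s·w; u·v, u·w) is LR-singularised by p). Then p·s·p = s, p·u·p = u, p·v·p = w, v·w·v = v and w·v·w = w; in particular (s,v;s,w) and (u,v;u,w) are p-linked diamonds. (Lemma 7.7.) -/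
/-!
Lemma 7.7: if the square `(s·v, s·w; u·v, u·w)` arising from friendly pairs of projections
is LR-singularised by a projection `p`, then `p·s·p = s`, `p·u·p = u`, `p·v·p = w`,
`v·w·v = v` and `w·v·w = w`; in particular `(s,v;s,w)` and `(u,v;u,w)` are `p`-linked
diamonds.
-/

namespace Stmt6

variable {S : Type*} [Semigroup S] [StarMul S]

/-- A projection of a regular *-semigroup. -/
def IsProjection (p : S) : Prop := star p = p ∧ p * p = p

/-- Friendliness of projections. -/
def Friends (p q : S) : Prop := p * q * p = p ∧ q * p * q = q

private lemma pull {a : S} (h : a * a = a) (x : S) : a * (a * x) = a * x := by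
  rw [← mul_assoc, h]

theorem proj_singularised_square_is_linked
    (hreg : ∀ a : S, a * star a * a = a)
    (s u v w p : S)
    (hs : IsProjection s) (hu : IsProjection u) (hv : IsProjection v)
    (hw : IsProjection w) (hp : IsProjection p)
    (hsv : Friends s v) (hsw : Friends s w) (huv : Friends u v) (huw : Friends u w)
    (h1 : p * (s * v) = s * v) (h2 : p * (u * v) = u * v)
    (h3 : (s * v) * p = s * w) (h4 : (u * v) * p = u * w) :
    p * s * p = s ∧ p * u * p = u ∧ p * v * p = w ∧ v * w * v = v ∧ w * v * w = w := by
  obtain ⟨hs1, hs2⟩ := hs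
  obtain ⟨hu1, hu2⟩ := hu
  obtain ⟨hv1, hv2⟩ := hv
  obtain ⟨hw1, hw2⟩ := hw
  obtain ⟨hp1, hp2⟩ := hp
  obtain ⟨hsv1, hsv2⟩ := hsv
  obtain ⟨hsw1, hsw2⟩ := hsw
  obtain ⟨huv1, huv2⟩ := huv
  obtain ⟨huw1, huw2⟩ := huw
  -- p * s = s
  have ps : p * s = s := by
    calc p * s = p * (s * v * s) := by rw [hsv1]
      _ = (p * (s * v)) * s := by rw [← mul_assoc]
      _ = (s * v) * s := by rw [h1]
      _ = s := hsv1
  have sp : s * p = s := by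
    have := congrArg star ps
    simpa [star_mul, hs1, hp1] using this
  have psp : p * s * p = s := by rw [ps]; exact sp
  -- p * u = u
  have pu : p * u = u := by
    calc p * u = p * (u * v * u) := by rw [huv1]
      _ = (p * (u * v)) * u := by rw [← mul_assoc]
      _ = (u * v) * u := by rw [h2]
      _ = u := huv1
  have up : u * p = u := by
    have := congrArg star pu
    simpa [star_mul, hu1, hp1] using this
  have pup : p * u * p = u := by rw [pu]; exact up
  -- star of h3 : p * (v * s) = w * s
  have h3' : p * (v * s) = w * s := by
    have := congrArg star h3
    simpa [star_mul, hs1, hv1, hw1, hp1, mul_assoc] using this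
  -- p * v = w * (s * v)
  have pv : p * v = w * (s * v) := by
    calc p * v = p * (v * s * v) := by rw [hsv2]
      _ = (p * (v * s)) * v := by rw [← mul_assoc]
      _ = (w * s) * v := by rw [h3']
      _ = w * (s * v) := mul_assoc _ _ _
  have vp : v * p = v * (s * w) := by
    have := congrArg star pv
    simpa [star_mul, hs1, hv1, hw1, hp1, mul_assoc] using this
  -- p * v * p = w
  have pvp : p * v * p = w := by
    calc p * v * p = (w * (s * v)) * p := by rw [pv]
      _ = w * ((s * v) * p) := mul_assoc _ _ _
      _ = w * (s * w) := by rw [h3]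
      _ = w := by rw [← mul_assoc]; exact hsw2
  -- p*v is idempotent (from regularity)
  have idem : (p * v) * (p * v) = p * v := by
    have h := hreg (p * v)
    rw [star_mul, hv1, hp1] at h
    calc (p * v) * (p * v) = p * v * (v * p) * (p * v) := by
          simp only [mul_assoc, pull hv2, pull hp2]
      _ = p * v := h
  have wv : w * v = p * v := by
    calc w * v = (p * v * p) * v := by rw [pvp]
      _ = (p * v) * (p * v) := by rw [mul_assoc]
      _ = p * v := idem
  have vw : v * w = v * p := by
    have := congrArg star wv
    simpa [star_mul, hv1, hw1, hp1] using this
  have vpv : v * p * v = v := by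
    calc v * p * v = (v * (s * w)) * v := by rw [vp]
      _ = v * (s * (w * v)) := by simp only [mul_assoc]
      _ = v * (s * (p * v)) := by rw [wv]
      _ = v * ((s * p) * v) := by rw [← mul_assoc s p v]
      _ = v * (s * v) := by rw [sp]
      _ = v := by rw [← mul_assoc]; exact hsv2
  have vwv : v * w * v = v := by
    calc v * w * v = (v * p) * v := by rw [vw]
      _ = v := vpv
  have wvw : w * v * w = w := by
    calc w * v * w = (p * v) * w := by rw [wv]
      _ = p * (v * w) := mul_assoc _ _ _
      _ = p * (v * p) := by rw [vw]
      _ = p * v * p := (mul_assoc _ _ _).symm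
      _ = w := pvp
  exact ⟨psp, pup, pvp, vwv, wvw⟩

end Stmt6
end

section
/- Let n ≥ 1 and let L = Setoid (Fin n) be the complete lattice of equivalence relations on Fin n (ordered by inclusion of relations, with join ⊔, meet ⊓ and top element ⊤ the full relation). Let G be the group defined by the presentation with one generator a(σ,τ) for each ordered pair σ, τ ∈ L, and defining relations: (i) a(⊤,σ) = 1 for all σ ≠ ⊤; (ii) a(σ,σ) = 1 for all σ; (iii) a(σ,τ)·a(τ,σ) = 1 for all σ, τ; (iv) a(⊤,⊤)⁻¹·a(⊤,τ) = a(σ,⊤)⁻¹·a(σ,τ) whenever σ ≤ τ; (v) a(σ, σ⊔τ)⁻¹·a(σ,τ) = a(σ⊓τ, σ⊔τ)⁻¹·a(σ⊓τ, τ) for all σ, τ. Then G is the trivial group; equivalently, every generator a(σ,τ) equals 1 in G. -/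
/-!
Proposition 8.3 (presented-group core): the group presented by generators `a(σ,τ)` for
pairs of equivalence relations on `Fin n`, with the tree, diagonal, inversion and
linked-diamond relations, is trivial.
-/

namespace Stmt7

/-- The complete lattice of equivalence relations on `Fin n`. -/
abbrev L (n : ℕ) := Setoid (Fin n)

/-- The relators of the presentation:
(i) `a(⊤,σ)` for `σ ≠ ⊤`;
(ii) `a(σ,σ)`;
(iii) `a(σ,τ)·a(τ,σ)`;
(iv) `(a(⊤,⊤)⁻¹·a(⊤,τ))·(a(σ,⊤)⁻¹·a(σ,τ))⁻¹` for `σ ≤ τ`;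
(v) `(a(σ,σ⊔τ)⁻¹·a(σ,τ))·(a(σ⊓τ,σ⊔τ)⁻¹·a(σ⊓τ,τ))⁻¹`. -/
def diamondRels (n : ℕ) : Set (FreeGroup (L n × L n)) :=
  { x |
    (∃ σ : L n, σ ≠ ⊤ ∧ x = FreeGroup.of ((⊤ : L n), σ)) ∨
    (∃ σ : L n, x = FreeGroup.of (σ, σ)) ∨
    (∃ σ τ : L n, x = FreeGroup.of (σ, τ) * FreeGroup.of (τ, σ)) ∨
    (∃ σ τ : L n, σ ≤ τ ∧
      x = ((FreeGroup.of ((⊤ : L n), (⊤ : L n)))⁻¹ * FreeGroup.of ((⊤ : L n), τ)) *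
        ((FreeGroup.of (σ, (⊤ : L n)))⁻¹ * FreeGroup.of (σ, τ))⁻¹) ∨
    (∃ σ τ : L n,
      x = ((FreeGroup.of (σ, σ ⊔ τ))⁻¹ * FreeGroup.of (σ, τ)) *
        ((FreeGroup.of (σ ⊓ τ, σ ⊔ τ))⁻¹ * FreeGroup.of (σ ⊓ τ, τ))⁻¹) }

theorem presented_group_trivial (n : ℕ) (hn : 1 ≤ n) :
    ∀ g : PresentedGroup (diamondRels n), g = 1 := by
  classical
  let f : FreeGroup (L n × L n) →* PresentedGroup (diamondRels n) :=
    QuotientGroup.mk' (Subgroup.normalClosure (diamondRels n))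
  have hrel : ∀ x ∈ diamondRels n, f x = 1 := by
    intro x hx
    exact (QuotientGroup.eq_one_iff x).mpr (Subgroup.subset_normalClosure hx)
  have hdiag : ∀ σ : L n, f (FreeGroup.of (σ, σ)) = 1 := fun σ =>
    hrel _ (Or.inr (Or.inl ⟨σ, rfl⟩))
  have htop : ∀ σ : L n, f (FreeGroup.of ((⊤ : L n), σ)) = 1 := by
    intro σ
    by_cases h : σ = ⊤
    · subst h; exact hdiag ⊤
    · exact hrel _ (Or.inl ⟨σ, h, rfl⟩)
  have hinv : ∀ σ τ : L n, f (FreeGroup.of (σ, τ)) * f (FreeGroup.of (τ, σ)) = 1 := by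
    intro σ τ
    have := hrel _ (Or.inr (Or.inr (Or.inl ⟨σ, τ, rfl⟩)))
    simpa using this
  have hbot : ∀ σ : L n, f (FreeGroup.of (σ, (⊤ : L n))) = 1 := by
    intro σ
    have h := hinv σ ⊤
    rw [htop σ, mul_one] at h
    exact h
  have hle : ∀ σ τ : L n, σ ≤ τ → f (FreeGroup.of (σ, τ)) = 1 := by
    intro σ τ h
    have h4 := hrel _ (Or.inr (Or.inr (Or.inr (Or.inl ⟨σ, τ, h, rfl⟩))))
    simp only [map_mul, map_inv, hdiag, htop, hbot, one_mul, inv_one, mul_one] at h4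
    simpa using h4.symm
  have hgen : ∀ σ τ : L n, f (FreeGroup.of (σ, τ)) = 1 := by
    intro σ τ
    have h5 := hrel _ (Or.inr (Or.inr (Or.inr (Or.inr ⟨σ, τ, rfl⟩))))
    simp only [map_mul, map_inv,
      hle σ (σ ⊔ τ) le_sup_left, hle (σ ⊓ τ) (σ ⊔ τ) (inf_le_left.trans le_sup_left),
      hle (σ ⊓ τ) τ inf_le_right, one_mul, inv_one, mul_one] at h5
    simpa using h5
  have hall : ∀ w : FreeGroup (L n × L n), f w = 1 := by
    intro w
    induction w using FreeGroup.induction_on with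
    | C1 => exact map_one f
    | of p => exact hgen p.1 p.2
    | inv_of p ih => rw [map_inv, ih, inv_one]
    | mul a b iha ihb => rw [map_mul, iha, ihb, one_mul]
  intro g
  induction g using QuotientGroup.induction_on with
  | H w => exact hall w

end Stmt7
end

section
/- Let n ≥ 1 and let G be the group of the previous presentation over L = Setoid (Fin n): generators a(σ,τ) for σ, τ ∈ L with relations (i) a(⊤,σ) = 1 for σ ≠ ⊤; (ii) a(σ,σ) = 1; (iii) a(σ,τ)·a(τ,σ) = 1; (iv) a(⊤,⊤)⁻¹·a(⊤,τ) = a(σ,⊤)⁻¹·a(σ,τ) whenever σ ≤ τ; (v) a(σ, σ⊔τ)⁻¹·a(σ,τ) = a(σ⊓τ, σ⊔τ)⁻¹·a(σ⊓τ, τ). Then for all σ, τ ∈ L with σ ≤ τ, the generator a(σ,τ) equals 1 in G. -/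
/-!
Claim 8.1: in the group presented by generators `a(σ,τ)` for
pairs of equivalence relations on `Fin n`, with the tree, diagonal, inversion and
linked-diamond relations, every generator `a(σ,τ)` with `σ ≤ τ` equals `1`.
-/

namespace Stmt8

/-- The complete lattice of equivalence relations on `Fin n`. -/
abbrev L (n : ℕ) := Setoid (Fin n)

/-- The relators of the presentation:
(i) `a(⊤,σ)` for `σ ≠ ⊤`;
(ii) `a(σ,σ)`;
(iii) `a(σ,τ)·a(τ,σ)`;
(iv) `(a(⊤,⊤)⁻¹·a(⊤,τ))·(a(σ,⊤)⁻¹·a(σ,τ))⁻¹` for `σ ≤ τ`;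
(v) `(a(σ,σ⊔τ)⁻¹·a(σ,τ))·(a(σ⊓τ,σ⊔τ)⁻¹·a(σ⊓τ,τ))⁻¹`. -/
def diamondRels (n : ℕ) : Set (FreeGroup (L n × L n)) :=
  { x |
    (∃ σ : L n, σ ≠ ⊤ ∧ x = FreeGroup.of ((⊤ : L n), σ)) ∨
    (∃ σ : L n, x = FreeGroup.of (σ, σ)) ∨
    (∃ σ τ : L n, x = FreeGroup.of (σ, τ) * FreeGroup.of (τ, σ)) ∨
    (∃ σ τ : L n, σ ≤ τ ∧
      x = ((FreeGroup.of ((⊤ : L n), (⊤ : L n)))⁻¹ * FreeGroup.of ((⊤ : L n), τ)) *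
        ((FreeGroup.of (σ, (⊤ : L n)))⁻¹ * FreeGroup.of (σ, τ))⁻¹) ∨
    (∃ σ τ : L n,
      x = ((FreeGroup.of (σ, σ ⊔ τ))⁻¹ * FreeGroup.of (σ, τ)) *
        ((FreeGroup.of (σ ⊓ τ, σ ⊔ τ))⁻¹ * FreeGroup.of (σ ⊓ τ, τ))⁻¹) }


lemma rel_one {n : ℕ} {r : FreeGroup (L n × L n)} (hr : r ∈ diamondRels n) :
    (PresentedGroup.mk (diamondRels n) r) = 1 := by
  have : r ∈ Subgroup.normalClosure (diamondRels n) := Subgroup.subset_normalClosure hr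
  exact (QuotientGroup.eq_one_iff r).mpr this

theorem generator_trivial_of_le (n : ℕ) (hn : 1 ≤ n) (σ τ : L n) (h : σ ≤ τ) :
    (PresentedGroup.of (σ, τ) : PresentedGroup (diamondRels n)) = 1 := by
  have of_eq : ∀ p : L n × L n, (PresentedGroup.of p : PresentedGroup (diamondRels n)) =
      PresentedGroup.mk (diamondRels n) (FreeGroup.of p) := fun _ => rfl
  have top : ∀ ρ : L n,
      (PresentedGroup.of ((⊤ : L n), ρ) : PresentedGroup (diamondRels n)) = 1 := by
    intro ρ
    by_cases hρ : ρ = ⊤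
    · subst hρ
      rw [of_eq]
      exact rel_one (Or.inr (Or.inl ⟨⊤, rfl⟩))
    · rw [of_eq]
      exact rel_one (Or.inl ⟨ρ, hρ, rfl⟩)
  have toptop : ∀ ρ : L n,
      (PresentedGroup.of (ρ, (⊤ : L n)) : PresentedGroup (diamondRels n)) = 1 := by
    intro ρ
    have := rel_one (n := n) (Or.inr (Or.inr (Or.inl ⟨ρ, ⊤, rfl⟩)))
    rw [map_mul, ← of_eq, ← of_eq, top] at this
    simpa using this
  have h4 := rel_one (n := n) (Or.inr (Or.inr (Or.inr (Or.inl ⟨σ, τ, h, rfl⟩))))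
  simp only [map_mul, map_inv, ← of_eq, top, toptop] at h4
  simpa using h4

end Stmt8
end

section
/- Let n ≥ 3 and 1 ≤ r ≤ n−2. The simple graph with vertex set I(n,r) ⊕ J(n,r), whose edges are exactly the pairs (V, 𝖢(V)) for V ∈ I(n,r) together with the pairs (𝖵(C), C) for C ∈ J(n,r) (the set T_lex), is a tree; in other words, T_lex is a spanning tree of the Graham–Houghton graph GH(D(n,r)) of the rank-r 𝓓-class of the full transformation monoid. -/
/-!
Proposition 4.1 (first assertion): `T_lex` is a spanning tree of the Graham–Houghton
graph `GH(D(n,r))` of the rank-`r` 𝓓-class of the full transformation monoid `T_n`.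
Partitions of `Fin n` are encoded as equivalence relations (`Setoid (Fin n)`).
-/

namespace Stmt9

open Finset

/-- The set `𝖢(V)` of minima of the blocks of a partition `V`. -/
noncomputable def minSet {n : ℕ} (s : Setoid (Fin n)) : Finset (Fin n) :=
  open scoped Classical in
  Finset.univ.filter (fun x => ∀ y, s.r x y → x ≤ y)

/-- The interval partition `𝖵(C)` determined by a set `C = {c₁ < ⋯ < c_r}`: its blocks are
`{x : x ≤ c₁}, {x : c₁ < x ≤ c₂}, …, {x : c_{r-1} < x}`, realised as the kernel of the map
counting the non-maximal elements of `C` lying strictly below `x`. -/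
def intervalSetoid {n : ℕ} (C : Finset (Fin n)) : Setoid (Fin n) :=
  Setoid.ker (fun x => (C.filter (fun c => c < x ∧ ∃ d ∈ C, c < d)).card)

/-- `I(n,r)`: partitions of `Fin n` into exactly `r` blocks. -/
def Ipart (n r : ℕ) := {s : Setoid (Fin n) // Nat.card (Quotient s) = r}

/-- `J(n,r)`: `r`-element subsets of `Fin n`. -/
def Jset (n r : ℕ) := {C : Finset (Fin n) // C.card = r}

/-- Adjacency of the graph `T_lex`: `V` and `C` are adjacent iff `C = 𝖢(V)` or
`V = 𝖵(C)`. -/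
def tlexAdj (n r : ℕ) : (Ipart n r ⊕ Jset n r) → (Ipart n r ⊕ Jset n r) → Prop
  | Sum.inl V, Sum.inr C => C.1 = minSet V.1 ∨ V.1 = intervalSetoid C.1
  | Sum.inr C, Sum.inl V => C.1 = minSet V.1 ∨ V.1 = intervalSetoid C.1
  | _, _ => False

/-- The graph on `I(n,r) ⊕ J(n,r)` whose edges are the pairs `(V, 𝖢(V))` and
`(𝖵(C), C)`. -/
def tlexGraph (n r : ℕ) : SimpleGraph (Ipart n r ⊕ Jset n r) where
  Adj := tlexAdj n r
  symm := by
    constructor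
    intro a b hab
    cases a <;> cases b <;> first | exact hab | exact hab.elim
  loopless := by
    constructor
    intro a ha
    cases a <;> exact ha

/-! ### A generic criterion for being a tree -/

section Generic

variable {V : Type*}

lemma isAcyclic_of_parent [DecidableEq V] (G : SimpleGraph V) (parent : V → V) (m : V → ℕ)
    (hQ : ∀ a b, G.Adj a b → b = parent a ∨ a = parent b)
    (hR : ∀ a b, G.Adj a b → b = parent a → m b < m a) : G.IsAcyclic := by
  intro v w hw
  obtain ⟨u, hu, hmax⟩ := (w.support.toFinset).exists_max_image m
    ⟨v, by simp [SimpleGraph.Walk.start_mem_support]⟩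
  rw [List.mem_toFinset] at hu
  have hw' : (w.rotate u hu).IsCycle := hw.rotate hu
  have hsupp : ∀ x, x ∈ (w.rotate u hu).support → m x ≤ m u := by
    intro x hx
    rw [SimpleGraph.Walk.mem_support_iff] at hx
    rcases hx with rfl | hx
    · exact le_rfl
    · have := (w.support_rotate u hu).mem_iff.mp hx
      exact hmax x (List.mem_toFinset.mpr (List.mem_of_mem_tail this))
  set w' := w.rotate u hu with hw'def
  clear_value w'
  obtain ⟨b, hadj, p, rfl⟩ := SimpleGraph.Walk.not_nil_iff.mp hw'.not_nil
  rw [SimpleGraph.Walk.cons_isCycle_iff] at hw'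
  obtain ⟨hp, he⟩ := hw'
  have hb : b = parent u := by
    rcases hQ u b hadj with h | h
    · exact h
    · exact absurd (hsupp b (by simp [SimpleGraph.Walk.support_cons,
        SimpleGraph.Walk.start_mem_support]))
        (not_le.mpr (hR b u hadj.symm h))
  have hub : u ≠ b := hadj.ne
  have hnil : ¬ p.reverse.Nil := by
    rw [SimpleGraph.Walk.nil_iff_length_eq, SimpleGraph.Walk.length_reverse]
    intro h0
    exact hub (SimpleGraph.Walk.eq_of_length_eq_zero h0).symm
  obtain ⟨c, hadj2, q, hq⟩ := SimpleGraph.Walk.not_nil_iff.mp hnil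
  have hc : c = parent u := by
    rcases hQ u c hadj2 with h | h
    · exact h
    · refine absurd (hsupp c ?_) (not_le.mpr (hR c u hadj2.symm h))
      have : c ∈ p.reverse.support := by rw [hq]; simp [SimpleGraph.Walk.support_cons]
      rw [SimpleGraph.Walk.support_reverse, List.mem_reverse] at this
      simp [SimpleGraph.Walk.support_cons, this]
  apply he
  have : s(u, c) ∈ p.reverse.edges := by rw [hq]; simp [SimpleGraph.Walk.edges_cons]
  rw [SimpleGraph.Walk.edges_reverse, List.mem_reverse] at this
  rw [hc, ← hb] at this
  exact this

lemma isTree_of_parent [DecidableEq V] [Nonempty V] (G : SimpleGraph V)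
    (parent : V → V) (m : V → ℕ) (root : V)
    (hQ : ∀ a b, G.Adj a b → b = parent a ∨ a = parent b)
    (hR : ∀ a b, G.Adj a b → b = parent a → m b < m a)
    (hP : ∀ v, v ≠ root → G.Adj v (parent v)) : G.IsTree := by
  constructor
  · constructor
    suffices h : ∀ k v, m v ≤ k → G.Reachable v root by
      intro a b
      exact (h (m a) a le_rfl).trans (h (m b) b le_rfl).symm
    intro k
    induction k with
    | zero =>
      intro v hv
      by_cases h : v = root
      · exact h ▸ SimpleGraph.Reachable.refl _
      · exact absurd (hR v (parent v) (hP v h) rfl) (by omega)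
    | succ k ih =>
      intro v hv
      by_cases h : v = root
      · exact h ▸ SimpleGraph.Reachable.refl _
      · have h1 := hP v h
        have h2 := hR v (parent v) h1 rfl
        exact (h1.reachable).trans (ih (parent v) (by omega))
  · exact isAcyclic_of_parent G parent m hQ hR

end Generic

/-! ### Combinatorial lemmas -/

variable {n : ℕ}

lemma mem_minSet {s : Setoid (Fin n)} {x : Fin n} :
    x ∈ minSet s ↔ ∀ y, s.r x y → x ≤ y := by
  classical
  simp [minSet]

/-- The number of blocks equals the number of block minima. -/
lemma minSet_card (s : Setoid (Fin n)) : (minSet s).card = Nat.card (Quotient s) := by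
  classical
  have : Nonempty ((minSet s : Finset (Fin n)) ≃ Quotient s) := by
    refine ⟨Equiv.ofBijective (fun x => Quotient.mk s x.1) ⟨?_, ?_⟩⟩
    · rintro ⟨x, hx⟩ ⟨y, hy⟩ h
      have hxy : s.r x y := Quotient.exact h
      have hyx : s.r y x := s.symm' hxy
      exact Subtype.ext (le_antisymm (mem_minSet.mp hx y hxy) (mem_minSet.mp hy x hyx))
    · refine fun q => Quotient.inductionOn q (fun z => ?_)
      set T := Finset.univ.filter (fun y => s.r z y) with hT
      have hTne : T.Nonempty := ⟨z, by simp [hT, s.refl']⟩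
      set x := T.min' hTne with hx
      have hzx : s.r z x := by
        have := T.min'_mem hTne
        simp [hT] at this
        exact this
      have hxmem : x ∈ minSet s := by
        rw [mem_minSet]
        intro y hxy
        exact T.min'_le y (by simp [hT]; exact s.trans' hzx hxy)
      exact ⟨⟨x, hxmem⟩, Quotient.sound (s.symm' hzx)⟩
  obtain ⟨e⟩ := this
  rw [← Nat.card_eq_finsetCard, Nat.card_congr e]

/-- The non-maximal elements of `C`. -/
def nmax (C : Finset (Fin n)) : Finset (Fin n) := C.filter (fun c => ∃ d ∈ C, c < d)

/-- The counting function whose kernel is `intervalSetoid C`. -/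
def phi (C : Finset (Fin n)) (x : Fin n) : ℕ :=
  ((nmax C).filter (fun c => c < x)).card

lemma intervalSetoid_r {C : Finset (Fin n)} {x y : Fin n} :
    (intervalSetoid C).r x y ↔ phi C x = phi C y := by
  have h : ∀ z : Fin n, (C.filter (fun c => c < z ∧ ∃ d ∈ C, c < d)).card = phi C z := by
    intro z
    rw [phi, nmax, Finset.filter_filter]
    congr 1
    apply Finset.filter_congr
    intro c _
    tauto
  show (C.filter _).card = (C.filter _).card ↔ _
  rw [h x, h y]

lemma nmax_eq_erase (C : Finset (Fin n)) (hC : C.Nonempty) :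
    nmax C = C.erase (C.max' hC) := by
  ext c
  simp only [nmax, mem_filter, mem_erase]
  constructor
  · rintro ⟨hc, d, hd, hcd⟩
    exact ⟨fun h => absurd (C.le_max' d hd) (by rw [h] at hcd; exact not_le.mpr hcd), hc⟩
  · rintro ⟨hne, hc⟩
    exact ⟨hc, C.max' hC, C.max'_mem hC, lt_of_le_of_ne (C.le_max' c hc) hne⟩

lemma nmax_card (C : Finset (Fin n)) (hC : C.Nonempty) : (nmax C).card = C.card - 1 := by
  rw [nmax_eq_erase C hC, Finset.card_erase_of_mem (C.max'_mem hC)]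

lemma phi_zero {C : Finset (Fin n)} {x : Fin n} (hx : x.val = 0) : phi C x = 0 := by
  rw [phi, Finset.card_eq_zero, Finset.filter_eq_empty_iff]
  intro c _
  simp [Fin.lt_def, hx]

lemma phi_le (C : Finset (Fin n)) (x : Fin n) : phi C x ≤ (nmax C).card :=
  Finset.card_le_card (Finset.filter_subset _ _)

lemma phi_succ {C : Finset (Fin n)} {x y : Fin n} (h : y.val = x.val + 1) :
    phi C y ≤ phi C x + 1 := by
  rw [phi, phi]
  have : (nmax C).filter (fun c => c < y) ⊆ insert x ((nmax C).filter (fun c => c < x)) := by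
    intro c hc
    simp only [mem_filter, Fin.lt_def, h] at hc
    rcases Nat.lt_succ_iff_lt_or_eq.mp hc.2 with h1 | h1
    · exact Finset.mem_insert_of_mem (by rw [mem_filter, Fin.lt_def]; exact ⟨hc.1, h1⟩)
    · have : c = x := Fin.ext h1
      rw [this]
      exact Finset.mem_insert_self x _
  calc _ ≤ (insert x ((nmax C).filter (fun c => c < x))).card := Finset.card_le_card this
    _ ≤ _ := Finset.card_insert_le _ _

lemma phi_top (C : Finset (Fin n)) (hC : C.Nonempty) {x : Fin n} (hx : x.val = n - 1) :
    phi C x = (nmax C).card := by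
  rw [phi]
  congr 1
  rw [Finset.filter_eq_self]
  intro c hc
  rw [nmax_eq_erase C hC] at hc
  have h1 : c ≤ C.max' hC := C.le_max' c (Finset.mem_of_mem_erase hc)
  have h2 : c ≠ C.max' hC := Finset.ne_of_mem_erase hc
  have h3 : (C.max' hC).val ≤ n - 1 := by omega
  rw [Fin.lt_def, hx]
  have := lt_of_le_of_ne h1 h2
  rw [Fin.lt_def] at this
  omega

lemma phi_surj (C : Finset (Fin n)) (hC : C.Nonempty) (hn : 1 ≤ n) {k : ℕ}
    (hk : k ≤ (nmax C).card) : ∃ x, phi C x = k := by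
  have main : ∀ j, ∀ x : Fin n, x.val = j → ∀ k ≤ phi C x, ∃ y, phi C y = k := by
    intro j
    induction j with
    | zero =>
      intro x hx k hk
      rw [phi_zero hx] at hk
      exact ⟨x, by rw [phi_zero hx]; omega⟩
    | succ j ih =>
      intro x hx k hk
      have hj : j < n := by omega
      by_cases h : k ≤ phi C ⟨j, hj⟩
      · exact ih ⟨j, hj⟩ rfl k h
      · refine ⟨x, ?_⟩
        have h1 : phi C x ≤ phi C ⟨j, hj⟩ + 1 := phi_succ (by simp [hx])
        omega
  have htop := phi_top C hC (x := ⟨n - 1, by omega⟩) rfl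
  exact main (n - 1) ⟨n - 1, by omega⟩ rfl k (by omega)

lemma card_quotient_intervalSetoid (C : Finset (Fin n)) (hC : C.Nonempty) (hn : 1 ≤ n) :
    Nat.card (Quotient (intervalSetoid C)) = C.card := by
  have e : Quotient (intervalSetoid C)
      ≃ Set.range (fun x => (C.filter (fun c => c < x ∧ ∃ d ∈ C, c < d)).card) :=
    Setoid.quotientKerEquivRange _
  have hphi : (fun x : Fin n => (C.filter (fun c => c < x ∧ ∃ d ∈ C, c < d)).card) = phi C := by
    funext z
    rw [phi, nmax, Finset.filter_filter]
    congr 1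
    apply Finset.filter_congr
    intro c _
    tauto
  rw [Nat.card_congr e, hphi]
  have hrange : Set.range (phi C) = Set.Iio C.card := by
    ext k
    simp only [Set.mem_range, Set.mem_Iio]
    constructor
    · rintro ⟨x, rfl⟩
      have h1 := phi_le C x
      have h2 := nmax_card C hC
      have h3 := Finset.card_pos.mpr hC
      omega
    · intro hk
      apply phi_surj C hC hn
      have := nmax_card C hC
      omega
  rw [hrange]
  simp [Nat.card_eq_card_toFinset]

lemma mem_minSet_intervalSetoid {C : Finset (Fin n)} {x : Fin n} :
    x ∈ minSet (intervalSetoid C) ↔ x.val = 0 ∨ ∃ c ∈ nmax C, c.val + 1 = x.val := by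
  rw [mem_minSet]
  constructor
  · intro h
    by_contra hcon
    push_neg at hcon
    obtain ⟨hx0, hnm⟩ := hcon
    set y : Fin n := ⟨x.val - 1, by omega⟩ with hy
    have hphi : phi C y = phi C x := by
      unfold phi
      congr 1
      apply Finset.filter_congr
      intro c hc
      have hne := hnm c hc
      simp only [Fin.lt_def, hy]
      constructor <;> intro <;> omega
    have := h y (intervalSetoid_r.mpr (hphi.symm))
    rw [Fin.le_def] at this
    simp only [hy] at this
    omega
  · intro h y hr
    have hphi : phi C x = phi C y := intervalSetoid_r.mp hr
    rcases h with h0 | ⟨c, hc, hcx⟩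
    · rw [Fin.le_def]; omega
    · by_contra hxy
      rw [Fin.le_def, not_le] at hxy
      have hss : (nmax C).filter (fun c => c < y) ⊂ (nmax C).filter (fun c => c < x) := by
        constructor
        · intro a ha
          rw [mem_filter] at ha ⊢
          refine ⟨ha.1, lt_trans ha.2 ?_⟩
          rw [Fin.lt_def]; omega
        · intro hsub
          have hcin : c ∈ (nmax C).filter (fun c => c < x) := by
            rw [mem_filter]; exact ⟨hc, by rw [Fin.lt_def]; omega⟩
          have := hsub hcin
          rw [mem_filter, Fin.lt_def] at this
          omega
      have := Finset.card_lt_card hss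
      unfold phi at hphi
      omega

lemma image_val_minSet (C : Finset (Fin n)) (hn : 0 < n) :
    (minSet (intervalSetoid C)).image Fin.val
      = insert 0 ((nmax C).image (fun c => c.val + 1)) := by
  ext k
  simp only [mem_image, mem_insert]
  constructor
  · rintro ⟨x, hx, rfl⟩
    rcases mem_minSet_intervalSetoid.mp hx with h0 | ⟨c, hc, hcx⟩
    · exact Or.inl h0
    · exact Or.inr ⟨c, hc, hcx⟩
  · rintro (rfl | ⟨c, hc, rfl⟩)
    · exact ⟨⟨0, hn⟩, mem_minSet_intervalSetoid.mpr (Or.inl rfl), rfl⟩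
    · have hb : c.val + 1 < n := by
        obtain ⟨-, d, -, hcd⟩ := Finset.mem_filter.mp hc
        rw [Fin.lt_def] at hcd
        have := d.isLt
        omega
      exact ⟨⟨c.val + 1, hb⟩, mem_minSet_intervalSetoid.mpr (Or.inr ⟨c, hc, rfl⟩), rfl⟩

lemma sum_minSet_intervalSetoid (C : Finset (Fin n)) (hn : 0 < n) :
    ∑ x ∈ minSet (intervalSetoid C), x.val
      = (∑ c ∈ nmax C, c.val) + (nmax C).card := by
  have h1 : ∑ x ∈ minSet (intervalSetoid C), x.val
      = ∑ k ∈ (minSet (intervalSetoid C)).image Fin.val, k := by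
    rw [Finset.sum_image (fun a _ b _ h => Fin.val_injective h)]
  rw [h1, image_val_minSet C hn, Finset.sum_insert, Finset.sum_image]
  · rw [zero_add, Finset.sum_add_distrib, Finset.sum_const, smul_eq_mul, mul_one]
  · intro a _ b _ h
    exact Fin.val_injective (by simp only at h; omega)
  · simp

lemma sum_eq_nmax (C : Finset (Fin n)) (hC : C.Nonempty) :
    ∑ c ∈ C, c.val = (∑ c ∈ nmax C, c.val) + (C.max' hC).val := by
  rw [nmax_eq_erase C hC, Finset.sum_erase_add C _ (C.max'_mem hC)]

lemma max'_card_le (C : Finset (Fin n)) (hC : C.Nonempty) :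
    C.card ≤ (C.max' hC).val + 1 := by
  have h1 : C.image Fin.val ⊆ Finset.range ((C.max' hC).val + 1) := by
    intro k hk
    obtain ⟨c, hc, rfl⟩ := Finset.mem_image.mp hk
    rw [Finset.mem_range]
    have := C.le_max' c hc
    rw [Fin.le_def] at this
    omega
  calc C.card = (C.image Fin.val).card := (Finset.card_image_of_injective _ Fin.val_injective).symm
    _ ≤ _ := le_trans (Finset.card_le_card h1) (by rw [Finset.card_range])

/-- The root set `{0, 1, …, r-1}`. -/
def C0 (n r : ℕ) : Finset (Fin n) := Finset.univ.filter (fun x => x.val < r)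

lemma C0_card {r : ℕ} (hr : r ≤ n) : (C0 n r).card = r := by
  have h1 : (C0 n r).image Fin.val = Finset.range r := by
    ext k
    simp only [C0, mem_image, mem_filter, mem_univ, true_and, Finset.mem_range]
    constructor
    · rintro ⟨x, hx, rfl⟩; exact hx
    · intro hk; exact ⟨⟨k, by omega⟩, hk, rfl⟩
  calc (C0 n r).card = ((C0 n r).image Fin.val).card :=
        (Finset.card_image_of_injective _ Fin.val_injective).symm
    _ = r := by rw [h1, Finset.card_range]

lemma eq_C0_of_max' (C : Finset (Fin n)) (hC : C.Nonempty) {r : ℕ} (hr : r ≤ n)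
    (hcard : C.card = r) (hmax : (C.max' hC).val = r - 1) : C = C0 n r := by
  apply Finset.eq_of_subset_of_card_le
  · intro c hc
    have := C.le_max' c hc
    rw [Fin.le_def] at this
    have hr1 : 1 ≤ r := by
      have := Finset.card_pos.mpr hC; omega
    simp only [C0, mem_filter, mem_univ, true_and]
    omega
  · rw [C0_card hr, hcard]

/-- Strict decrease of the total sum unless `C = C0`. -/
lemma sum_minSet_lt (C : Finset (Fin n)) {r : ℕ} (hr1 : 1 ≤ r) (hrn : r ≤ n)
    (hcard : C.card = r) (hne : C ≠ C0 n r) :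
    ∑ x ∈ minSet (intervalSetoid C), x.val < ∑ c ∈ C, c.val := by
  have hC : C.Nonempty := Finset.card_pos.mp (by omega)
  have hn : 0 < n := Fin.pos_iff_nonempty.mpr ⟨hC.choose⟩
  rw [sum_minSet_intervalSetoid C hn, sum_eq_nmax C hC, nmax_card C hC, hcard]
  have h1 := max'_card_le C hC
  have h2 : (C.max' hC).val ≠ r - 1 := fun h => hne (eq_C0_of_max' C hC hrn hcard h)
  omega

lemma minSet_intervalSetoid_C0 {r : ℕ} (hr1 : 1 ≤ r) (hrn : r ≤ n) :
    minSet (intervalSetoid (C0 n r)) = C0 n r := by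
  have hn : 0 < n := by omega
  have hC : (C0 n r).Nonempty := Finset.card_pos.mp (by rw [C0_card hrn]; omega)
  apply Finset.eq_of_subset_of_card_le
  · intro x hx
    simp only [C0, mem_filter, mem_univ, true_and]
    rcases mem_minSet_intervalSetoid.mp hx with h0 | ⟨c, hc, hcx⟩
    · omega
    · obtain ⟨hcC0, d, hdC0, hcd⟩ := Finset.mem_filter.mp hc
      simp only [C0, mem_filter, mem_univ, true_and] at hcC0 hdC0
      rw [Fin.lt_def] at hcd
      omega
  · rw [minSet_card, card_quotient_intervalSetoid (C0 n r) hC hn, C0_card hrn]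

/-! ### The main theorem -/

theorem tlex_isTree (n r : ℕ) (hn : 3 ≤ n) (hr1 : 1 ≤ r) (hr2 : r ≤ n - 2) :
    (tlexGraph n r).IsTree := by
  classical
  have hrn : r ≤ n := by omega
  have hn0 : 0 < n := by omega
  -- J-side objects
  have hJcard : ∀ V : Ipart n r, (minSet V.1).card = r := fun V => by
    rw [minSet_card, V.2]
  have hIcard : ∀ C : Jset n r, Nat.card (Quotient (intervalSetoid C.1)) = r := fun C => by
    rw [card_quotient_intervalSetoid C.1 (Finset.card_pos.mp (by rw [C.2]; omega)) (by omega),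
      C.2]
  set root : Ipart n r ⊕ Jset n r := Sum.inr ⟨C0 n r, C0_card hrn⟩ with hroot
  have : Nonempty (Ipart n r ⊕ Jset n r) := ⟨root⟩
  set parent : (Ipart n r ⊕ Jset n r) → (Ipart n r ⊕ Jset n r) := fun v =>
    match v with
    | Sum.inl V => Sum.inr ⟨minSet V.1, hJcard V⟩
    | Sum.inr C =>
        if C.1 = C0 n r then Sum.inr C else Sum.inl ⟨intervalSetoid C.1, hIcard C⟩
    with hparent
  set m : (Ipart n r ⊕ Jset n r) → ℕ := fun v =>
    match v with
    | Sum.inl V => 2 * (∑ x ∈ minSet V.1, x.val) + 1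
    | Sum.inr C => 2 * (∑ x ∈ C.1, x.val)
    with hm
  apply isTree_of_parent (tlexGraph n r) parent m root
  · -- hQ
    rintro (V | C) (V' | C') hadj
    · exact hadj.elim
    · -- inl V, inr C'
      by_cases h : C'.1 = minSet V.1
      · exact Or.inl (by simp only [hparent]; exact congrArg Sum.inr (Subtype.ext h))
      · rcases hadj with h' | h'
        · exact absurd h' h
        · right
          have hC'ne : C'.1 ≠ C0 n r := by
            intro hC0
            apply h
            rw [hC0] at h' ⊢
            rw [h', minSet_intervalSetoid_C0 hr1 hrn]
          simp only [hparent, hC'ne, if_neg hC'ne]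
          exact congrArg Sum.inl (Subtype.ext h')
    · -- inr C, inl V'
      by_cases h : C.1 = minSet V'.1
      · exact Or.inr (by simp only [hparent]; exact congrArg Sum.inr (Subtype.ext h))
      · rcases hadj with h' | h'
        · exact absurd h' h
        · left
          have hCne : C.1 ≠ C0 n r := by
            intro hC0
            apply h
            rw [hC0] at h' ⊢
            rw [h', minSet_intervalSetoid_C0 hr1 hrn]
          simp only [hparent, if_neg hCne]
          exact congrArg Sum.inl (Subtype.ext h')
    · exact hadj.elim
  · -- hR
    rintro (V | C) b hadj hb
    · -- a = inl V
      subst hb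
      simp only [hparent, hm]
      omega
    · -- a = inr C
      by_cases h : C.1 = C0 n r
      · exfalso
        rw [hb] at hadj
        simp only [hparent, if_pos h] at hadj
        exact hadj
      · subst hb
        simp only [hparent, if_neg h, hm]
        have := sum_minSet_lt C.1 hr1 hrn C.2 h
        omega
  · -- hP
    rintro (V | C) hv
    · simp only [hparent]
      exact Or.inl rfl
    · have hCne : C.1 ≠ C0 n r := by
        intro h
        exact hv (by rw [hroot]; exact congrArg Sum.inr (Subtype.ext h))
      simp only [hparent, if_neg hCne]
      exact Or.inr rfl

end Stmt9
end
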